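/- arXiv:2508.07310 — 3 statements merged into one kernel-verified Lean document; each statement's English description precedes it below -/
import Mathlib

section
/- Let 0 < D ≤ A. For every representation N of n over any digit set S ⊇ {-1,0,1}, there exists a representation N' of n over {-1,0,1} with T(N', λ') ≤ T(N, λ), where λ and λ' are the respective highest indices. In other words, the digit set {-1,0,1} suffices to achieve the minimal parallel computation time. -/
/-!
Recode the digits from the least significant end, propagating a carry: `dᵢ + cᵢ = εᵢ + 2 cᵢ₊₁`
with `εᵢ ∈ {-1, 0, 1}` and `|dᵢ + cᵢ| = |εᵢ| + 2 |cᵢ₊₁|`, so that weight is only ever moved, and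
halved, upwards. The time `T(N, λ)` is the largest `cost` of a nonzero digit. For a nonzero
output digit at `p`, let `q ≤ p` be the last position receiving no carry. The input digit at `q`
is nonzero, and since every position in `(q, p]` receives a nonzero carry, the input weight on
`[q, p)` exceeds the output weight there plus the carry into `p` by at least `p - q`. As `D ≤ A`,
the cost of `p` in the output is then at most the cost of `q` in the input.
-/

noncomputable def T (D A : ℝ) (d : ℕ → ℤ) : ℕ → ℝ
  | 0 => if d 0 = 0 then 0 else (((d 0).natAbs : ℝ) - 1) * A
  | i + 1 =>
      if d (i + 1) = 0 then T D A d i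
      else if ∀ j < i + 1, d j = 0 then
        ((i : ℝ) + 1) * D + (((d (i + 1)).natAbs : ℝ) - 1) * A
      else max (T D A d i) (((i : ℝ) + 1) * D) + ((d (i + 1)).natAbs : ℝ) * A

noncomputable def delta (A : ℝ) (d : ℕ → ℤ) : ℕ → ℝ
  | 0 => 0
  | i + 1 =>
      if d (i + 1) = 0 then delta A d i - 1
      else if ∀ j < i + 1, d j = 0 then 0
      else max (delta A d i + (A - 1)) A

def val (d : ℕ → ℤ) (lam : ℕ) : ℤ := ∑ i ∈ Finset.range (lam + 1), d i * 2 ^ i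

-- `tdiv` and `tmod` round towards zero, so the digit `tmod t 2` has the sign of `t`.
def carry (d : ℕ → ℤ) : ℕ → ℤ
  | 0 => 0
  | i + 1 => (d i + carry d i).tdiv 2

def recode (d : ℕ → ℤ) (i : ℕ) : ℤ := (d i + carry d i).tmod 2

section Recoding

variable {d : ℕ → ℤ}

lemma recode_add_two_mul_carry_succ (d : ℕ → ℤ) (i : ℕ) :
    recode d i + 2 * carry d (i + 1) = d i + carry d i :=
  Int.tmod_add_mul_tdiv _ _

lemma natAbs_recode_add_two_mul_natAbs_carry_succ (d : ℕ → ℤ) (i : ℕ) :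
    (recode d i).natAbs + 2 * (carry d (i + 1)).natAbs = (d i + carry d i).natAbs := by
  rw [recode, carry, Int.natAbs_tmod, Int.natAbs_tdiv]
  exact Nat.mod_add_div _ _

lemma recode_mem (d : ℕ → ℤ) (i : ℕ) : recode d i = -1 ∨ recode d i = 0 ∨ recode d i = 1 := by
  have h : (recode d i).natAbs < 2 := by
    rw [recode, Int.natAbs_tmod]
    exact Nat.mod_lt _ two_pos
  omega

lemma carry_eq_zero_of_forall_lt {q : ℕ} (h : ∀ j < q, d j = 0) : carry d q = 0 := by
  induction q with
  | zero => rfl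
  | succ q ih =>
    have hq := natAbs_recode_add_two_mul_natAbs_carry_succ d q
    rw [h q q.lt_succ_self, ih fun j hj => h j (by omega)] at hq
    omega

lemma recode_eq_zero_of_forall_lt {q i : ℕ} (h : ∀ j < q, d j = 0) (hi : i < q) :
    recode d i = 0 := by
  have hi' := natAbs_recode_add_two_mul_natAbs_carry_succ d i
  rw [h i hi, carry_eq_zero_of_forall_lt (q := i) fun j hj => h j (by omega)] at hi'
  omega

lemma val_succ (d : ℕ → ℤ) (m : ℕ) : val d (m + 1) = val d m + d (m + 1) * 2 ^ (m + 1) :=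
  Finset.sum_range_succ _ _

lemma val_recode_add_carry (d : ℕ → ℤ) (m : ℕ) :
    val (recode d) m + carry d (m + 1) * 2 ^ (m + 1) = val d m := by
  induction m with
  | zero =>
    have h := recode_add_two_mul_carry_succ d 0
    rw [carry, add_zero] at h
    simp only [val, zero_add, Finset.sum_range_one, pow_zero, mul_one, pow_one]
    linear_combination h
  | succ m ih =>
    rw [val_succ, val_succ, ← ih]
    linear_combination 2 ^ (m + 1) * recode_add_two_mul_carry_succ d (m + 1)

lemma natAbs_carry_add_le {m : ℕ} (h : ∀ l, m ≤ l → d l = 0) (k : ℕ) :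
    (carry d (m + k)).natAbs ≤ (carry d m).natAbs - k := by
  induction k with
  | zero => simp
  | succ k ih =>
    have hk := natAbs_recode_add_two_mul_natAbs_carry_succ d (m + k)
    rw [h (m + k) (by omega), zero_add] at hk
    rw [← add_assoc]
    omega

lemma carry_add_natAbs_eq_zero {m : ℕ} (h : ∀ l, m ≤ l → d l = 0) :
    carry d (m + (carry d m).natAbs) = 0 := by
  simpa using natAbs_carry_add_le h (carry d m).natAbs

lemma sum_natAbs_recode_add_le {a b : ℕ} (hab : a ≤ b) :
    ∑ l ∈ Finset.Ico a b, (recode d l).natAbs + (carry d b).natAbs ≤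
      ∑ l ∈ Finset.Ico a b, (d l).natAbs + (carry d a).natAbs := by
  induction b, hab using Nat.le_induction with
  | base => simp
  | succ b hab ih =>
    rw [Finset.sum_Ico_succ_top hab, Finset.sum_Ico_succ_top hab]
    have hb := natAbs_recode_add_two_mul_natAbs_carry_succ d b
    have := (d b).natAbs_add_le (carry d b)
    omega

lemma sum_natAbs_recode_add_sub_le {a b : ℕ} (hab : a ≤ b)
    (hc : ∀ l, a < l → l ≤ b → carry d l ≠ 0) :
    ∑ l ∈ Finset.Ico a b, (recode d l).natAbs + (carry d b).natAbs + (b - a) ≤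
      ∑ l ∈ Finset.Ico a b, (d l).natAbs + (carry d a).natAbs := by
  induction b, hab using Nat.le_induction with
  | base => simp
  | succ b hab ih =>
    rw [Finset.sum_Ico_succ_top hab, Finset.sum_Ico_succ_top hab]
    have ih := ih fun l hal hlb => hc l hal (by omega)
    have hb := natAbs_recode_add_two_mul_natAbs_carry_succ d b
    have := (d b).natAbs_add_le (carry d b)
    have := Int.natAbs_pos.mpr (hc (b + 1) (by omega) le_rfl)
    omega

end Recoding

/-- The term of `T D A d lam` contributed by a nonzero digit at position `p`: the digit is
available at time `p D`, after which the `|d l|` additions of every position `p ≤ l ≤ lam` are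
performed one after another, except the very first one when `p` is the lowest nonzero position. -/
noncomputable def cost (D A : ℝ) (d : ℕ → ℤ) (lam p : ℕ) : ℝ :=
  p * D + ((∑ l ∈ Finset.Icc p lam, (d l).natAbs : ℕ) - if ∀ j < p, d j = 0 then 1 else 0) * A

section Cost

variable {D A : ℝ} {d : ℕ → ℤ}

lemma cost_succ {lam p : ℕ} (hp : p ≤ lam) :
    cost D A d (lam + 1) p = cost D A d lam p + (d (lam + 1)).natAbs * A := by
  simp only [cost, Finset.sum_Icc_succ_top (by omega : p ≤ lam + 1)]
  push_cast
  ring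

lemma cost_self (p : ℕ) :
    cost D A d p p = p * D + ((d p).natAbs - if ∀ j < p, d j = 0 then 1 else 0) * A := by
  simp [cost]

lemma T_le_of_forall_cost_le {lam : ℕ} {M : ℝ}
    (h : ∀ p ≤ lam, d p ≠ 0 → cost D A d lam p ≤ M) (h0 : (∀ p ≤ lam, d p = 0) → 0 ≤ M) :
    T D A d lam ≤ M := by
  induction lam generalizing M with
  | zero =>
    rw [T]
    split_ifs with hd
    · exact h0 fun p hp => by rwa [Nat.le_zero.mp hp]
    · simpa [cost_self, hd] using h 0 le_rfl hd
  | succ lam ih =>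
    rw [T]
    split_ifs with hd hfirst
    · refine ih (fun p hp hdp => ?_) fun hz => h0 fun p hp => ?_
      · simpa [cost_succ hp, hd] using h p (by omega) hdp
      · rcases hp.lt_or_eq with hp | rfl
        exacts [hz p (by omega), hd]
    · have hp := h (lam + 1) le_rfl hd
      rw [cost_self, if_pos hfirst] at hp
      push_cast at hp
      linarith
    · have hp := h (lam + 1) le_rfl hd
      rw [cost_self, if_neg hfirst] at hp
      push_cast at hp
      suffices max (T D A d lam) ((lam + 1) * D) ≤ M - (d (lam + 1)).natAbs * A by linarith
      refine max_le (ih (fun p hp hdp => ?_) fun hz => absurd (fun j hj => hz j (by omega)) hfirst)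
        (by linarith)
      have := h p (by omega) hdp
      rw [cost_succ hp] at this
      linarith

lemma cost_le_T {lam p : ℕ} (hp : p ≤ lam) (hdp : d p ≠ 0) :
    cost D A d lam p ≤ T D A d lam := by
  induction lam with
  | zero =>
    obtain rfl := Nat.le_zero.mp hp
    simp [cost_self, T, hdp]
  | succ lam ih =>
    rcases hp.lt_or_eq with hp | rfl
    · rw [cost_succ (by omega), T]
      split_ifs with hd hfirst
      · simpa [hd] using ih (by omega)
      · exact absurd (hfirst p hp) hdp
      · have := ih (by omega)
        have := le_max_left (T D A d lam) ((lam + 1) * D)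
        linarith
    · rw [cost_self, T, if_neg hdp]
      split_ifs with hfirst
      · push_cast
        linarith
      · have := le_max_right (T D A d lam) ((lam + 1) * D)
        push_cast
        linarith

lemma T_nonneg (hD : 0 ≤ D) (hA : 0 ≤ A) (lam : ℕ) : 0 ≤ T D A d lam := by
  induction lam with
  | zero =>
    rw [T]
    split_ifs with hd
    · rfl
    · have : (1 : ℝ) ≤ (d 0).natAbs := by exact_mod_cast Int.natAbs_pos.mpr hd
      positivity
  | succ lam ih =>
    rw [T]
    split_ifs with hd
    · exact ih
    · have : (1 : ℝ) ≤ (d (lam + 1)).natAbs := by exact_mod_cast Int.natAbs_pos.mpr hd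
      positivity
    · positivity

end Cost

lemma exists_le_carry_eq_zero_of_recode_ne_zero {d : ℕ → ℤ} {p : ℕ} (hrp : recode d p ≠ 0) :
    ∃ q ≤ p, d q ≠ 0 ∧ carry d q = 0 ∧ ∀ l, q < l → l ≤ p → carry d l ≠ 0 := by
  classical
  obtain ⟨q, hqp, hcq, hcarry⟩ :
      ∃ q ≤ p, carry d q = 0 ∧ ∀ l, q < l → l ≤ p → carry d l ≠ 0 :=
    ⟨_, Nat.findGreatest_le p,
      Nat.findGreatest_spec (P := fun q => carry d q = 0) (Nat.zero_le p) rfl,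
      fun _ => Nat.findGreatest_is_greatest⟩
  refine ⟨q, hqp, fun hdq => ?_, hcq, hcarry⟩
  have h := natAbs_recode_add_two_mul_natAbs_carry_succ d q
  rw [hdq, hcq] at h
  rcases hqp.lt_or_eq with hlt | heq
  · exact hcarry (q + 1) q.lt_succ_self hlt (by omega)
  · exact hrp (heq ▸ by omega)

lemma exists_cost_recode_le {D A : ℝ} (hDA : D ≤ A) (hA : 0 ≤ A) {d : ℕ → ℤ} {m p : ℕ}
    (hp : p ≤ m) (hrp : recode d p ≠ 0) :
    ∃ q ≤ m, d q ≠ 0 ∧ cost D A (recode d) m p ≤ cost D A d m q := by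
  obtain ⟨q, hqp, hdq, hcq, hcarry⟩ := exists_le_carry_eq_zero_of_recode_ne_zero hrp
  obtain ⟨k, rfl⟩ : ∃ k, p = q + k := ⟨p - q, by omega⟩
  refine ⟨q, by omega, hdq, ?_⟩
  set R := ∑ l ∈ Finset.Ico q (q + k), (recode d l).natAbs
  have hweight : ∑ l ∈ Finset.Icc (q + k) m, (recode d l).natAbs + k + R ≤
      ∑ l ∈ Finset.Icc q m, (d l).natAbs := by
    have hlow := sum_natAbs_recode_add_sub_le (d := d) (Nat.le_add_right q k) hcarry
    have hhigh := sum_natAbs_recode_add_le (d := d) (a := q + k) (b := m + 1) (by omega)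
    have hsplit := Finset.sum_Ico_consecutive (fun l => (d l).natAbs)
      (Nat.le_add_right q k) (by omega : q + k ≤ m + 1)
    rw [← Finset.Ico_add_one_right_eq_Icc, ← Finset.Ico_add_one_right_eq_Icc, ← hsplit]
    rw [hcq] at hlow
    omega
  -- if `q` is the lowest nonzero input position, the output vanishes below `q`, so either
  -- `p` is the lowest nonzero output position or the output is nonzero somewhere in `[q, p)`
  have hfirst : (if ∀ j < q, d j = 0 then (1 : ℝ) else 0) ≤
      R + if ∀ j < q + k, recode d j = 0 then 1 else 0 := by
    split_ifs with hd hr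
    · simp
    · push Not at hr
      obtain ⟨j, hj, hrj⟩ := hr
      have hqj : q ≤ j := by
        by_contra! hjq
        exact hrj (recode_eq_zero_of_forall_lt hd hjq)
      have : 1 ≤ R := (Int.natAbs_pos.mpr hrj).trans_le <|
        Finset.single_le_sum (f := fun l => (recode d l).natAbs) (fun _ _ => Nat.zero_le _)
          (Finset.mem_Ico.mpr ⟨hqj, hj⟩)
      simpa using (Nat.one_le_cast.mpr this : (1 : ℝ) ≤ R)
    · positivity
    · positivity
  have hweight' : (∑ l ∈ Finset.Icc (q + k) m, (recode d l).natAbs : ℕ) + (k : ℝ) + R ≤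
      (∑ l ∈ Finset.Icc q m, (d l).natAbs : ℕ) := by exact_mod_cast hweight
  have hshift : (k : ℝ) * D ≤ k * A := mul_le_mul_of_nonneg_left hDA k.cast_nonneg
  simp only [cost, Nat.cast_add]
  nlinarith

lemma T_recode_le {D A : ℝ} (hD : 0 ≤ D) (hDA : D ≤ A) (d : ℕ → ℤ) (m : ℕ) :
    T D A (recode d) m ≤ T D A d m := by
  have hA := hD.trans hDA
  refine T_le_of_forall_cost_le (fun p hp hrp => ?_) fun _ => T_nonneg hD hA m
  obtain ⟨q, hqm, hdq, hle⟩ := exists_cost_recode_le hDA hA hp hrp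
  exact hle.trans (cost_le_T hqm hdq)

section Truncation

variable {D A : ℝ} {d e : ℕ → ℤ} {lam : ℕ}

lemma T_congr (h : ∀ j ≤ lam, d j = e j) : T D A d lam = T D A e lam := by
  induction lam with
  | zero => rw [T, T, h 0 le_rfl]
  | succ lam ih =>
    have hlow : (∀ j < lam + 1, d j = 0) ↔ ∀ j < lam + 1, e j = 0 :=
      forall₂_congr fun j hj => by rw [h j (by omega)]
    rw [T, T, h (lam + 1) le_rfl, ih fun j hj => h j (by omega)]
    simp only [hlow]

lemma T_eq_of_forall_lt_eq_zero (h : ∀ j, lam < j → d j = 0) {m : ℕ} (hm : lam ≤ m) :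
    T D A d m = T D A d lam := by
  induction m, hm using Nat.le_induction with
  | base => rfl
  | succ m hm ih => rw [T, if_pos (h (m + 1) (by omega)), ih]

lemma val_congr (h : ∀ j ≤ lam, d j = e j) : val d lam = val e lam :=
  Finset.sum_congr rfl fun j hj => by rw [h j (Finset.mem_range_succ_iff.mp hj)]

lemma val_eq_of_forall_lt_eq_zero (h : ∀ j, lam < j → d j = 0) {m : ℕ} (hm : lam ≤ m) :
    val d m = val d lam := by
  induction m, hm using Nat.le_induction with
  | base => rfl
  | succ m hm ih => rw [val_succ, h (m + 1) (by omega), zero_mul, add_zero, ih]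

end Truncation

/-- The digit set {-1,0,1} suffices: for any representation over any digit
set (arbitrary integer digits), there is a {-1,0,1}-representation of the
same value with no larger parallel computation time, when 0 < D ≤ A. -/
theorem stmt5 (D A : ℝ) (hD : 0 < D) (hDA : D ≤ A)
    (lam : ℕ) (d : ℕ → ℤ) :
    ∃ (lam' : ℕ) (d' : ℕ → ℤ),
      (∀ i, d' i = -1 ∨ d' i = 0 ∨ d' i = 1) ∧
      val d' lam' = val d lam ∧
      T D A d' lam' ≤ T D A d lam := by
  set e : ℕ → ℤ := fun j => if j ≤ lam then d j else 0
  have he : ∀ j ≤ lam, e j = d j := fun j hj => if_pos hj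
  have he' : ∀ j, lam < j → e j = 0 := fun j hj => if_neg (by omega)
  set m := lam + (carry e (lam + 1)).natAbs
  have hcarry : carry e (m + 1) = 0 := by
    rw [show m + 1 = lam + 1 + (carry e (lam + 1)).natAbs by omega]
    exact carry_add_natAbs_eq_zero fun l hl => he' l (by omega)
  refine ⟨m, recode e, recode_mem e, ?_, ?_⟩
  · rw [← val_congr he, ← val_eq_of_forall_lt_eq_zero he' (by omega : lam ≤ m),
      ← val_recode_add_carry e m, hcarry, zero_mul, add_zero]
  · calc T D A (recode e) m ≤ T D A e m := T_recode_le hD.le hDA e m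
      _ = T D A e lam := T_eq_of_forall_lt_eq_zero he' (by omega)
      _ = T D A d lam := T_congr he
end

section
/- Let D = 1 and 1 ≤ A < 2, and let N be the NAF representation of a positive integer n. Then δ(N, i) ≤ A for all i ≥ 0, and moreover δ(N, i) ≤ A − 1 whenever n_i = 0. -/
/-!
A zero digit lowers the delay by one, so after a digit of delay at most `A` a zero digit leaves
delay at most `A - 1`. In a NAF every nonzero digit is preceded by a zero, hence raises the delay
to at most `max ((A - 1) + (A - 1)) A`, which is `A` as soon as `A ≤ 2`.
-/

section Delay

variable {A : ℝ} {d : ℕ → ℤ} {i : ℕ}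

theorem delta_succ_of_eq_zero (h : d (i + 1) = 0) : delta A d (i + 1) = delta A d i - 1 := by
  simp only [delta, h, if_true]

theorem delta_succ_le_of_ne_zero (hA : 0 ≤ A) (h : d (i + 1) ≠ 0) :
    delta A d (i + 1) ≤ max (delta A d i + (A - 1)) A := by
  simp only [delta, h, if_false]
  split_ifs
  · exact hA.trans (le_max_right _ _)
  · exact le_rfl

theorem delta_le_of_naf (hA1 : 1 ≤ A) (hA2 : A ≤ 2) (hnaf : ∀ i, d i * d (i + 1) = 0) (i : ℕ) :
    delta A d i ≤ A ∧ (d i = 0 → delta A d i ≤ A - 1) := by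
  induction i with
  | zero => exact ⟨by simp only [delta]; linarith, fun _ => by simp only [delta]; linarith⟩
  | succ i ih =>
    by_cases h : d (i + 1) = 0
    · rw [delta_succ_of_eq_zero h]
      exact ⟨by linarith [ih.1], fun _ => by linarith [ih.1]⟩
    · have hprev : d i = 0 := (mul_eq_zero.mp (hnaf i)).resolve_right h
      have hle := delta_succ_le_of_ne_zero (by linarith : (0 : ℝ) ≤ A) h
      refine ⟨hle.trans (max_le ?_ le_rfl), fun h' => absurd h' h⟩
      linarith [ih.2 hprev]

end Delay

theorem stmt13_general (A : ℝ) (hA1 : 1 ≤ A) (hA2 : A < 2)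
    (d : ℕ → ℤ)
    (hnaf : ∀ i, d i * d (i + 1) = 0) :
    ∀ i : ℕ, delta A d i ≤ A ∧ (d i = 0 → delta A d i ≤ A - 1) :=
  delta_le_of_naf hA1 hA2.le hnaf

/-- For D = 1 and 1 ≤ A < 2, the NAF representation of a positive integer n
satisfies δ(N,i) ≤ A for all i, and δ(N,i) ≤ A − 1 whenever n_i = 0. -/
theorem stmt13 (A : ℝ) (hA1 : 1 ≤ A) (hA2 : A < 2) (n lam : ℕ) (hn : 0 < n)
    (d : ℕ → ℤ)
    (hd : ∀ i, d i = -1 ∨ d i = 0 ∨ d i = 1)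
    (hnaf : ∀ i, d i * d (i + 1) = 0)
    (hhigh : ∀ i, lam < i → d i = 0)
    (hval : val d lam = (n : ℤ)) :
    ∀ i : ℕ, delta A d i ≤ A ∧ (d i = 0 → delta A d i ≤ A - 1) :=
  stmt13_general A hA1 hA2 d hnaf
end

section
/- Let D = 1 and 1 ≤ A < 2. Consider a digit block of the form 01^{p_k}...01^{p_2}01^{p_1} (k > 0, each p_j > 0) occurring at indices ℓ through i in a representation, where the delay entering the block (at index ℓ−1) is at most 1. If the delay after processing this block exceeds A, then flipping the entire block via the value-preserving transformation (replacing it by 10^{p_k}(-1)0^{p_{k-1}-1}...(-1)0^{p_1-1}(-1)) yields delay exactly A at index i. -/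
/-- The block 0 1^{p_k} ... 0 1^{p_2} 0 1^{p_1}, written least significant
digit first. -/
def origBlock (ps : List ℕ) : List ℤ :=
  ps.flatMap (fun p => List.replicate p 1 ++ [0])

def flipGo : List ℕ → List ℤ
  | [] => [1]
  | p :: rest => -1 :: (List.replicate p 0 ++ flipGo rest)

/-- The value-preserving flip of the block, written least significant digit
first: 1 0^{p_k} (-1) 0^{p_{k-1}} (-1) ... (-1) 0^{p_1 - 1} (-1)
(most significant first). -/
def flipBlock : List ℕ → List ℤ
  | [] => []
  | p :: rest => -1 :: (List.replicate (p - 1) 0 ++ flipGo rest)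

section Aux

noncomputable def ff (A e : ℝ) (x : ℤ) : ℝ :=
  if x = 0 then e - 1 else max (e + (A - 1)) A

noncomputable def gg (A e : ℝ) : ℝ := max (e + (A - 1)) A

noncomputable def ggIt (A : ℝ) : ℕ → ℝ → ℝ
  | 0, e => e
  | n + 1, e => ggIt A n (gg A e)

noncomputable def Om (A : ℝ) : ℝ → List ℕ → ℝ
  | e, [] => e
  | e, p :: r => Om A (ggIt A p e - 1) r

noncomputable def Ph (A : ℝ) : ℝ → List ℕ → ℝ
  | e, [] => gg A e
  | e, p :: r => Ph A (gg A e - p) r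

lemma delta_zero_step (A : ℝ) (d : ℕ → ℤ) (n : ℕ) (h : d (n+1) = 0) :
    delta A d (n+1) = delta A d n - 1 := by
  rw [delta]; simp [h]

lemma delta_nz_step (A : ℝ) (d : ℕ → ℤ) (n : ℕ) (h : d (n+1) ≠ 0)
    (h2 : ¬ ∀ j < n+1, d j = 0) :
    delta A d (n+1) = max (delta A d n + (A - 1)) A := by
  rw [delta, if_neg h, if_neg h2]

lemma delta_congr (A : ℝ) (d d' : ℕ → ℤ) : ∀ n, (∀ t ≤ n, d' t = d t) →
    delta A d' n = delta A d n
  | 0, _ => rfl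
  | n + 1, h => by
    have ih := delta_congr A d d' n (fun t ht => h t (le_trans ht (Nat.le_succ n)))
    have hd : d' (n+1) = d (n+1) := h (n+1) le_rfl
    have hall : (∀ j < n+1, d' j = 0) ↔ (∀ j < n+1, d j = 0) := by
      constructor <;> intro hz j hj
      · rw [← h j (le_of_lt hj)]; exact hz j hj
      · rw [h j (le_of_lt hj)]; exact hz j hj
    rw [delta, delta, hd, ih]
    by_cases h0 : d (n+1) = 0
    · simp [h0]
    · by_cases h1 : ∀ j < n+1, d j = 0 <;> simp only [h0, h1, hall]

/-- Bridge: delta over a block of digits equals a fold. -/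
lemma delta_foldl (A : ℝ) (d : ℕ → ℤ) (l : ℕ) (hl : d l ≠ 0) :
    ∀ L : List ℤ, (∀ t < L.length, d (l + 1 + t) = L.getD t 0) →
      delta A d (l + L.length) = List.foldl (ff A) (delta A d l) L := by
  intro L
  induction L using List.reverseRecOn with
  | nil => intro _; simp
  | append_singleton L x ih =>
    intro hL
    have hlen : (L ++ [x]).length = L.length + 1 := by simp
    have hdx : d (l + 1 + L.length) = x := by
      have := hL L.length (by simp)
      rwa [List.getD_append_right L [x] 0 L.length le_rfl, Nat.sub_self] at this
    have hLL : ∀ t < L.length, d (l + 1 + t) = L.getD t 0 := by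
      intro t ht
      have := hL t (by rw [hlen]; omega)
      rwa [List.getD_append L [x] 0 t ht] at this
    have key : l + (L ++ [x]).length = (l + L.length) + 1 := by rw [hlen]; omega
    have hnz : ¬ ∀ j < (l + L.length) + 1, d j = 0 := by
      intro hz; exact hl (hz l (by omega))
    have hidx : d ((l + L.length) + 1) = x := by
      rw [show (l + L.length) + 1 = l + 1 + L.length by omega]; exact hdx
    rw [key, List.foldl_append, ← ih hLL]
    by_cases h0 : x = 0
    · rw [delta_zero_step A d _ (by rw [hidx]; exact h0)]
      simp [ff, h0]
    · rw [delta_nz_step A d _ (by rw [hidx]; exact h0) hnz]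
      simp [ff, h0]

lemma foldl_replicate_zero (A e : ℝ) (n : ℕ) :
    List.foldl (ff A) e (List.replicate n 0) = e - n := by
  induction n generalizing e with
  | zero => simp
  | succ n ih =>
    rw [List.replicate_succ, List.foldl_cons, ih]
    simp [ff]
    ring

lemma foldl_replicate_one (A e : ℝ) (n : ℕ) :
    List.foldl (ff A) e (List.replicate n 1) = ggIt A n e := by
  induction n generalizing e with
  | zero => simp [ggIt]
  | succ n ih =>
    rw [List.replicate_succ, List.foldl_cons, ih]
    simp [ff, gg, ggIt]

lemma foldl_origBlock (A : ℝ) : ∀ (ps : List ℕ) (e : ℝ),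
    List.foldl (ff A) e (origBlock ps) = Om A e ps
  | [], e => by simp [origBlock, Om]
  | p :: r, e => by
    have h : origBlock (p :: r) = List.replicate p 1 ++ ([0] ++ origBlock r) := by
      simp [origBlock]
    rw [h, List.foldl_append, foldl_replicate_one, List.foldl_append,
      List.foldl_cons, List.foldl_nil, foldl_origBlock A r, Om]
    congr 1

lemma foldl_flipGo (A : ℝ) : ∀ (r : List ℕ) (e : ℝ),
    List.foldl (ff A) e (flipGo r) = Ph A e r
  | [], e => by simp [flipGo, Ph, ff, gg]
  | p :: r, e => by
    rw [flipGo, List.foldl_cons, List.foldl_append, foldl_replicate_zero,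
      foldl_flipGo A r, Ph]
    congr 1

lemma flipGo_length : ∀ r : List ℕ, (flipGo r).length = (origBlock r).length + 1
  | [] => by simp [flipGo, origBlock]
  | p :: r => by
    rw [flipGo, origBlock]
    simp [flipGo_length r, origBlock, List.flatMap_cons]

lemma gg_le_of_le_one (A : ℝ) (hA1 : 1 ≤ A) (e : ℝ) (h : e ≤ 1) : gg A e = A := by
  rw [gg, max_eq_right]; linarith

/-- Main combinatorial lemma. -/
lemma main_lemma (A : ℝ) (hA1 : 1 ≤ A) (hA2 : A < 2) :
    ∀ (r : List ℕ), (∀ q ∈ r, 0 < q) → ∀ e e' : ℝ,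
      (e' ≤ 1 ∨ (e ≤ A - 1 ∧ e' ≤ A)) → A < Om A e r → Ph A e' r = A
  | [], _, e, e', hI, hbig => by
    rw [Ph]
    rcases hI with h1 | ⟨h2, _⟩
    · exact gg_le_of_le_one A hA1 e' h1
    · rw [Om] at hbig; linarith
  | p :: r, hpos, e, e', hI, hbig => by
    rw [Om] at hbig
    rw [Ph]
    have hp : 0 < p := hpos p List.mem_cons_self
    have hpos' : ∀ q ∈ r, 0 < q := fun q hq => hpos q (List.mem_cons_of_mem p hq)
    apply main_lemma A hA1 hA2 r hpos' _ _ _ hbig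
    rcases hI with h1 | ⟨h2, h3⟩
    · left
      rw [gg_le_of_le_one A hA1 e' h1]
      have : (1:ℝ) ≤ (p:ℝ) := by exact_mod_cast hp
      linarith
    · have hgge'2 : gg A e' ≤ 2*A - 1 := by
        rw [gg]
        apply max_le (by linarith) (by linarith)
      rcases Nat.lt_or_ge p 2 with hp2 | hp2
      · -- p = 1
        have hp1 : p = 1 := by omega
        subst hp1
        right
        constructor
        · have hge : gg A e = A := by
            rw [gg, max_eq_right]; linarith
          rw [ggIt, ggIt, hge]
        · push_cast; linarith
      · -- p ≥ 2
        left
        have : (2:ℝ) ≤ (p:ℝ) := by exact_mod_cast hp2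
        linarith

end Aux

/-- For D = 1, 1 ≤ A < 2: if a block 0 1^{p_k}...0 1^{p_1} is entered with
delay at most 1 and its processing yields delay exceeding A at its top
index i, then flipping the block yields delay exactly A at i. -/
theorem stmt15 (A : ℝ) (hA1 : 1 ≤ A) (hA2 : A < 2)
    (ps : List ℕ) (hne : ps ≠ []) (hpos : ∀ p ∈ ps, 0 < p)
    (l : ℕ) (d d' : ℕ → ℤ)
    (hblk : ∀ t < (origBlock ps).length, d (l + t) = (origBlock ps).getD t 0)
    (hblk' : ∀ t < (flipBlock ps).length,
      d' (l + t) = (flipBlock ps).getD t 0)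
    (hlow : ∀ t < l, d' t = d t)
    (henter : 0 < l → delta A d (l - 1) ≤ 1)
    (i : ℕ) (hi : i = l + (origBlock ps).length - 1)
    (hbig : A < delta A d i) :
    delta A d' i = A := by
  obtain ⟨p, rest, rfl⟩ := List.exists_cons_of_ne_nil hne
  have hp : 0 < p := hpos p List.mem_cons_self
  have hrest : ∀ q ∈ rest, 0 < q := fun q hq => hpos q (List.mem_cons_of_mem p hq)
  set M : List ℤ := List.replicate (p-1) 1 ++ ([0] ++ origBlock rest) with hMdef
  set M' : List ℤ := List.replicate (p-1) 0 ++ flipGo rest with hM'def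
  have hM : origBlock (p :: rest) = 1 :: M := by
    have h1 : List.replicate p (1:ℤ) = 1 :: List.replicate (p-1) 1 := by
      rw [← List.replicate_succ]
      congr 1
      omega
    simp only [origBlock, List.flatMap_cons, h1, hMdef]
    simp [origBlock]
  have hM' : flipBlock (p :: rest) = -1 :: M' := rfl
  have hM'len : M'.length = M.length := by
    rw [hMdef, hM'def]
    simp [flipGo_length rest]
  have hMlen : (origBlock (p::rest)).length = M.length + 1 := by rw [hM]; simp
  have hflen : (flipBlock (p::rest)).length = M.length + 1 := by
    rw [hM']; simp [hM'len]
  have hil : i = l + M.length := by omega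
  have hdl : d l = 1 := by
    have h := hblk 0 (by omega)
    rw [hM] at h
    simpa using h
  have hd'l : d' l = -1 := by
    have h := hblk' 0 (by omega)
    rw [hM'] at h
    simpa using h
  have hdM : ∀ t < M.length, d (l + 1 + t) = M.getD t 0 := by
    intro t ht
    have h := hblk (t+1) (by omega)
    rw [hM, List.getD_cons_succ] at h
    rw [show l + 1 + t = l + (t+1) by omega]
    exact h
  have hd'M : ∀ t < M'.length, d' (l + 1 + t) = M'.getD t 0 := by
    intro t ht
    have h := hblk' (t+1) (by omega)
    rw [hM', List.getD_cons_succ] at h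
    rw [show l + 1 + t = l + (t+1) by omega]
    exact h
  -- facts about the entering delay
  have hEle : delta A d l ≤ A := by
    cases l with
    | zero =>
      show (0:ℝ) ≤ A
      linarith
    | succ m =>
      have hen : delta A d m ≤ 1 := by
        have := henter (Nat.succ_pos m)
        simpa using this
      rw [delta]
      have hne0 : ¬ (d (m+1) = 0) := by rw [hdl]; norm_num
      rw [if_neg hne0]
      by_cases hz : ∀ j < m+1, d j = 0
      · rw [if_pos hz]; linarith
      · rw [if_neg hz]
        apply max_le (by linarith) le_rfl
  have hE'E : delta A d' l = delta A d l := by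
    cases l with
    | zero => rfl
    | succ m =>
      have ih : delta A d' m = delta A d m :=
        delta_congr A d d' m (fun t ht => hlow t (by omega))
      have hall : (∀ j < m+1, d' j = 0) ↔ (∀ j < m+1, d j = 0) := by
        constructor <;> intro hz j hj
        · rw [← hlow j (by omega)]; exact hz j hj
        · rw [hlow j (by omega)]; exact hz j hj
      have hne0 : ¬ (d (m+1) = 0) := by rw [hdl]; norm_num
      have hne0' : ¬ (d' (m+1) = 0) := by rw [hd'l]; norm_num
      rw [delta, delta, if_neg hne0, if_neg hne0', ih]
      by_cases hz : ∀ j < m+1, d j = 0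
      · rw [if_pos hz, if_pos (hall.mpr hz)]
      · rw [if_neg hz, if_neg (fun h => hz (hall.mp h))]
  -- bridge to folds
  have hbr : delta A d i = List.foldl (ff A) (delta A d l) M := by
    rw [hil]
    exact delta_foldl A d l (by rw [hdl]; norm_num) M hdM
  have hbr' : delta A d' i = List.foldl (ff A) (delta A d' l) M' := by
    rw [hil, ← hM'len]
    exact delta_foldl A d' l (by rw [hd'l]; norm_num) M' hd'M
  -- compute the folds
  have hfold : List.foldl (ff A) (delta A d l) M
      = Om A (ggIt A (p-1) (delta A d l) - 1) rest := by
    rw [hMdef, List.foldl_append, foldl_replicate_one, List.foldl_append,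
      List.foldl_cons, List.foldl_nil, foldl_origBlock]
    congr 1
  have hfold' : List.foldl (ff A) (delta A d l) M'
      = Ph A (delta A d l - ((p-1 : ℕ) : ℝ)) rest := by
    rw [hM'def, List.foldl_append, foldl_replicate_zero, foldl_flipGo]
  rw [hbr', hE'E, hfold']
  rw [hbr, hfold] at hbig
  apply main_lemma A hA1 hA2 rest hrest _ _ _ hbig
  by_cases h1 : delta A d l - ((p-1 : ℕ) : ℝ) ≤ 1
  · left; exact h1
  · right
    push_neg at h1
    have hc : ((p-1 : ℕ) : ℝ) < 1 := by linarith
    have hp1 : p - 1 = 0 := by exact_mod_cast Nat.lt_one_iff.mp (by exact_mod_cast hc)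
    rw [hp1]
    constructor
    · show ggIt A 0 (delta A d l) - 1 ≤ A - 1
      rw [ggIt]
      linarith
    · push_cast
      linarith
end
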